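/- Let A and Â be n×n real symmetric positive semidefinite matrices such that E = A − Â is positive semidefinite, let μ > 0, and let b ∈ ℝ^n be nonzero. Define x⋆ = (A + μI)⁻¹ b and x̂ = (Â + μI)⁻¹ b. Then ‖x̂ − x⋆‖₂ / ‖x⋆‖₂ ≤ ‖E‖ / μ, where ‖E‖ is the spectral norm of E. -/

import Mathlib

open Matrix MeasureTheory ProbabilityTheory
open scoped Classical

/-- Moore–Penrose pseudoinverse (characterized by the four Penrose conditions). -/
noncomputable def pinv {m n : ℕ} (A : Matrix (Fin m) (Fin n) ℝ) : Matrix (Fin n) (Fin m) ℝ :=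
  if h : ∃ B : Matrix (Fin n) (Fin m) ℝ,
      A * B * A = A ∧ B * A * B = B ∧ (A * B)ᵀ = A * B ∧ (B * A)ᵀ = B * A
  then h.choose else 0

/-- Nyström approximation of `A` with respect to the test matrix `X`. -/
noncomputable def nystrom {n l : ℕ} (A : Matrix (Fin n) (Fin n) ℝ)
    (X : Matrix (Fin n) (Fin l) ℝ) : Matrix (Fin n) (Fin n) ℝ :=
  A * X * pinv (Xᵀ * A * X) * (A * X)ᵀ

/-- Spectral (ℓ² operator) norm of a matrix. -/
noncomputable def specNorm {m n : ℕ} (M : Matrix (Fin m) (Fin n) ℝ) : ℝ :=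
  ‖LinearMap.toContinuousLinearMap (Matrix.toEuclideanLin M)‖

/-- Frobenius norm of a matrix. -/
noncomputable def frobNorm {m n : ℕ} (M : Matrix (Fin m) (Fin n) ℝ) : ℝ :=
  Real.sqrt (∑ i, ∑ j, (M i j) ^ 2)

/-- Euclidean norm of a vector. -/
noncomputable def euclNorm {n : ℕ} (x : Fin n → ℝ) : ℝ :=
  Real.sqrt (∑ i, (x i) ^ 2)

/-- Law of an `n × l` random matrix with independent standard normal entries. -/
noncomputable def gaussianEnsemble (n l : ℕ) : Measure (Fin n → Fin l → ℝ) :=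
  Measure.pi fun _ => Measure.pi fun _ => gaussianReal 0 1

/-- The psd square root of a psd matrix (junk value `0` otherwise). -/
noncomputable def matSqrt {n : ℕ} (M : Matrix (Fin n) (Fin n) ℝ) : Matrix (Fin n) (Fin n) ℝ :=
  if hM : M.PosSemidef then
    (hM.1.eigenvectorUnitary : Matrix (Fin n) (Fin n) ℝ) *
      diagonal (Real.sqrt ∘ hM.1.eigenvalues) *
      (star (hM.1.eigenvectorUnitary : Matrix (Fin n) (Fin n) ℝ))
  else 0

/-- ℓ² condition number of a symmetric matrix: ratio of the largest to the smallest
eigenvalue (junk value `0` for non-symmetric matrices). -/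
noncomputable def kappa {n : ℕ} (M : Matrix (Fin n) (Fin n) ℝ) : ℝ :=
  if hM : M.IsHermitian then (⨆ i, hM.eigenvalues i) / (⨅ i, hM.eigenvalues i) else 0

/-!
The resolvent identity gives `x̂ - x⋆ = (Â + μI)⁻¹ (A - Â) x⋆`. Since `Â` is psd,
`μ ‖y‖² ≤ ⟪y, (Â + μI) y⟫ ≤ ‖y‖ ‖(Â + μI) y‖` by Cauchy–Schwarz, so `(Â + μI)⁻¹` has
spectral norm at most `1/μ`, and `‖x̂ - x⋆‖ ≤ ‖A - Â‖ ‖x⋆‖ / μ`.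
-/

lemma euclNorm_eq_norm_toLp {n : ℕ} (x : Fin n → ℝ) : euclNorm x = ‖WithLp.toLp 2 x‖ := by
  simp [euclNorm, EuclideanSpace.norm_eq, sq_abs]

lemma euclNorm_nonneg {n : ℕ} (x : Fin n → ℝ) : 0 ≤ euclNorm x :=
  Real.sqrt_nonneg _

lemma euclNorm_mulVec_le {m n : ℕ} (M : Matrix (Fin m) (Fin n) ℝ) (v : Fin n → ℝ) :
    euclNorm (M *ᵥ v) ≤ specNorm M * euclNorm v := by
  rw [euclNorm_eq_norm_toLp, euclNorm_eq_norm_toLp]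
  exact (LinearMap.toContinuousLinearMap (Matrix.toEuclideanLin M)).le_opNorm _

lemma dotProduct_le_euclNorm_mul {n : ℕ} (x y : Fin n → ℝ) :
    x ⬝ᵥ y ≤ euclNorm x * euclNorm y := by
  rw [euclNorm_eq_norm_toLp, euclNorm_eq_norm_toLp]
  simpa [PiLp.inner_apply, dotProduct, mul_comm] using
    real_inner_le_norm (WithLp.toLp 2 x) (WithLp.toLp 2 y)

lemma dotProduct_self_eq_euclNorm_sq {n : ℕ} (x : Fin n → ℝ) : x ⬝ᵥ x = euclNorm x ^ 2 := by
  rw [euclNorm, Real.sq_sqrt (by positivity)]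
  simp [dotProduct, sq]

namespace Matrix.PosSemidef

lemma isUnit_add_smul_one {ι : Type*} [Fintype ι] [DecidableEq ι] {B : Matrix ι ι ℝ}
    (hB : B.PosSemidef) {μ : ℝ} (hμ : 0 < μ) : IsUnit (B + μ • 1) :=
  (PosDef.posSemidef_add hB (PosDef.one.smul hμ)).isUnit

lemma mul_euclNorm_le_euclNorm_add_smul_one_mulVec {n : ℕ} {B : Matrix (Fin n) (Fin n) ℝ}
    (hB : B.PosSemidef) (μ : ℝ) (y : Fin n → ℝ) :
    μ * euclNorm y ≤ euclNorm ((B + μ • 1) *ᵥ y) := by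
  have hquad : euclNorm y * (μ * euclNorm y) ≤ euclNorm y * euclNorm ((B + μ • 1) *ᵥ y) :=
    calc euclNorm y * (μ * euclNorm y) = y ⬝ᵥ ((μ • 1 : Matrix (Fin n) (Fin n) ℝ) *ᵥ y) := by
          rw [smul_mulVec, one_mulVec, dotProduct_smul, smul_eq_mul,
            dotProduct_self_eq_euclNorm_sq]
          ring
      _ ≤ y ⬝ᵥ (B *ᵥ y) + y ⬝ᵥ ((μ • 1 : Matrix (Fin n) (Fin n) ℝ) *ᵥ y) :=
          le_add_of_nonneg_left (by simpa using hB.dotProduct_mulVec_nonneg y)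
      _ = y ⬝ᵥ ((B + μ • 1) *ᵥ y) := by rw [add_mulVec, dotProduct_add]
      _ ≤ euclNorm y * euclNorm ((B + μ • 1) *ᵥ y) := dotProduct_le_euclNorm_mul _ _
  rcases (euclNorm_nonneg y).eq_or_lt with hy | hy
  · rw [← hy, mul_zero]
    exact euclNorm_nonneg _
  · exact le_of_mul_le_mul_left hquad hy

lemma euclNorm_inv_add_smul_one_mulVec_le {n : ℕ} {B : Matrix (Fin n) (Fin n) ℝ}
    (hB : B.PosSemidef) {μ : ℝ} (hμ : 0 < μ) (v : Fin n → ℝ) :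
    euclNorm ((B + μ • 1)⁻¹ *ᵥ v) ≤ euclNorm v / μ := by
  rw [le_div_iff₀ hμ, mul_comm]
  have hcancel : (B + μ • 1) *ᵥ ((B + μ • 1)⁻¹ *ᵥ v) = v := by
    rw [mulVec_mulVec,
      mul_nonsing_inv _ ((isUnit_iff_isUnit_det _).mp (hB.isUnit_add_smul_one hμ)), one_mulVec]
  have key := hB.mul_euclNorm_le_euclNorm_add_smul_one_mulVec μ ((B + μ • 1)⁻¹ *ᵥ v)
  rwa [hcancel] at key

end Matrix.PosSemidef

theorem sketch_and_solve_relative_error_general {n : ℕ}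
    (A Ahat : Matrix (Fin n) (Fin n) ℝ)
    (hA : A.PosSemidef) (hAhat : Ahat.PosSemidef)
    (μ : ℝ) (hμ : 0 < μ)
    (b : Fin n → ℝ) :
    euclNorm ((Ahat + μ • (1 : Matrix (Fin n) (Fin n) ℝ))⁻¹.mulVec b
        - (A + μ • (1 : Matrix (Fin n) (Fin n) ℝ))⁻¹.mulVec b)
      / euclNorm ((A + μ • (1 : Matrix (Fin n) (Fin n) ℝ))⁻¹.mulVec b)
      ≤ specNorm (A - Ahat) / μ := by
  set M := A + μ • (1 : Matrix (Fin n) (Fin n) ℝ)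
  set Mh := Ahat + μ • (1 : Matrix (Fin n) (Fin n) ℝ)
  have hresolvent : Mh⁻¹ *ᵥ b - M⁻¹ *ᵥ b = Mh⁻¹ *ᵥ ((A - Ahat) *ᵥ (M⁻¹ *ᵥ b)) := by
    rw [← sub_mulVec, inv_sub_inv (iff_of_true (hAhat.isUnit_add_smul_one hμ)
      (hA.isUnit_add_smul_one hμ)), add_sub_add_right_eq_sub, mulVec_mulVec, mulVec_mulVec]
  refine div_le_of_le_mul₀ (euclNorm_nonneg _) (div_nonneg (norm_nonneg _) hμ.le) ?_
  calc euclNorm (Mh⁻¹ *ᵥ b - M⁻¹ *ᵥ b)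
      = euclNorm (Mh⁻¹ *ᵥ ((A - Ahat) *ᵥ (M⁻¹ *ᵥ b))) := by rw [hresolvent]
    _ ≤ euclNorm ((A - Ahat) *ᵥ (M⁻¹ *ᵥ b)) / μ :=
        hAhat.euclNorm_inv_add_smul_one_mulVec_le hμ _
    _ ≤ specNorm (A - Ahat) * euclNorm (M⁻¹ *ᵥ b) / μ := by
        gcongr
        exact euclNorm_mulVec_le _ _
    _ = specNorm (A - Ahat) / μ * euclNorm (M⁻¹ *ᵥ b) := by ring

/-- Relative-error bound for solving the regularized system
with an approximation `Â ⪯ A`: `‖x̂ − x⋆‖₂/‖x⋆‖₂ ≤ ‖E‖/μ`. -/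
theorem sketch_and_solve_relative_error {n : ℕ}
    (A Ahat : Matrix (Fin n) (Fin n) ℝ)
    (hA : A.PosSemidef) (hAhat : Ahat.PosSemidef)
    (hE : (A - Ahat).PosSemidef)
    (μ : ℝ) (hμ : 0 < μ)
    (b : Fin n → ℝ) (hb : b ≠ 0) :
    euclNorm ((Ahat + μ • (1 : Matrix (Fin n) (Fin n) ℝ))⁻¹.mulVec b
        - (A + μ • (1 : Matrix (Fin n) (Fin n) ℝ))⁻¹.mulVec b)
      / euclNorm ((A + μ • (1 : Matrix (Fin n) (Fin n) ℝ))⁻¹.mulVec b)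
      ≤ specNorm (A - Ahat) / μ :=
  sketch_and_solve_relative_error_general A Ahat hA hAhat μ hμ b
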